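/- arXiv:2512.18313 — 3 statements merged into one kernel-verified Lean document; each statement's English description precedes it below -/
import Mathlib

section
/- Solution of the two-scale variational principle: fix a function H : X_2 × X_1 → ℝ and real parameters μ and γ > −1. Among all probability distributions p on X_2 × X_1, the functional φ[p] = S[p^{<1}] + (1+γ) Σ_{x_1} p^{<1}(x_1) S[p^{<2}(·|x_1)] + μ Σ_{x_2,x_1} p(x_2,x_1) H(x_2,x_1) is uniquely maximized by the two-scale measure given by p^{<2}(x_2|x_1) = exp(ζ₂ H(x_2,x_1))/Z_1(x_1) with ζ₂ = μ/(1+γ), Z_1(x_1) = Σ_{x_2} exp(ζ₂ H(x_2,x_1)), and p^{<1}(x_1) = Z_1(x_1)^{1+γ} / Σ_{y_1} Z_1(y_1)^{1+γ}. Furthermore the maximal value equals log Σ_{x_1} Z_1(x_1)^{1+γ}. -/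
/-!
Write `q = p^{<1}`, `c = p^{<2}`, `ζ₂ = μ/(1+γ)` and `W(x₁) = Z₁(x₁)^{1+γ}`. For a probability
vector `w` and positive weights `a`, `Σ (-w log w + w log a) = log Σ a - D(w ‖ a/Σ a)`, where
`D` is the relative entropy. Applied in each fibre (with `a = e^{ζ₂ H}`) and then to the
marginal (with `a = W`), this gives the chain rule
`φ[p] = log Σ W - D(q ‖ q*) - (1+γ) Σ_{x₁} q(x₁) D(c(·|x₁) ‖ c*(·|x₁))`,
where `q*`, `c*` are the marginal and conditional of the two-scale measure. Since `1 + γ > 0`,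
the subtracted term is nonnegative and vanishes only at the two-scale measure.
-/

open Finset Real

/-- Marginal on `X₁` of a distribution on `X₂ × X₁`. -/
noncomputable def marg1 {X₁ X₂ : Type*} [Fintype X₂] (p : X₂ × X₁ → ℝ) (x₁ : X₁) : ℝ :=
  ∑ x₂ : X₂, p (x₂, x₁)

/-- Conditional distribution on `X₂` given `x₁`. -/
noncomputable def cond2 {X₁ X₂ : Type*} [Fintype X₂] (p : X₂ × X₁ → ℝ)
    (x₂ : X₂) (x₁ : X₁) : ℝ :=
  p (x₂, x₁) / marg1 p x₁

/-- The functional `φ[p] = S[p^{<1}] + (1+γ) Σ_{x₁} p^{<1}(x₁) S[p^{<2}(·|x₁)]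
+ μ Σ p H`. -/
noncomputable def phi {X₁ X₂ : Type*} [Fintype X₁] [Fintype X₂]
    (H : X₂ × X₁ → ℝ) (μ γ : ℝ) (p : X₂ × X₁ → ℝ) : ℝ :=
  (∑ x₁, negMulLog (marg1 p x₁)) +
    (1 + γ) * ∑ x₁, marg1 p x₁ * ∑ x₂, negMulLog (cond2 p x₂ x₁) +
    μ * ∑ z, p z * H z

/-- The inner partition function `Z₁(x₁) = Σ_{x₂} e^{ζ₂ H(x₂,x₁)}`. -/
noncomputable def Z1 {X₁ X₂ : Type*} [Fintype X₂] (H : X₂ × X₁ → ℝ) (ζ₂ : ℝ)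
    (x₁ : X₁) : ℝ :=
  ∑ x₂, Real.exp (ζ₂ * H (x₂, x₁))

/-- The two-scale measure `p(x₂,x₁) = [Z₁(x₁)^{1+γ}/Σ_y Z₁(y)^{1+γ}]·[e^{ζ₂H}/Z₁(x₁)]`. -/
noncomputable def twoScale {X₁ X₂ : Type*} [Fintype X₁] [Fintype X₂]
    (H : X₂ × X₁ → ℝ) (μ γ : ℝ) (z : X₂ × X₁) : ℝ :=
  (Z1 H (μ / (1 + γ)) z.2 ^ (1 + γ) / ∑ y₁, Z1 H (μ / (1 + γ)) y₁ ^ (1 + γ)) *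
    (Real.exp ((μ / (1 + γ)) * H z) / Z1 H (μ / (1 + γ)) z.2)

open InformationTheory

/-- Equals `Σ w log (w / b)` when `w` and `b` have the same total mass; the `klFun` form has
nonnegative terms and needs no case split at `w i = 0`. -/
noncomputable def relEntropy {ι : Type*} [Fintype ι] (w b : ι → ℝ) : ℝ :=
  ∑ i, b i * klFun (w i / b i)

section RelEntropy

variable {ι : Type*} [Fintype ι] {w b : ι → ℝ}

theorem negMulLog_add_mul_log_add_mul_klFun (w : ℝ) {b : ℝ} (hb : b ≠ 0) :
    negMulLog w + w * log b + b * klFun (w / b) = b - w := by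
  rcases eq_or_ne w 0 with rfl | hw
  · simp [klFun]
  · rw [klFun, log_div hw hb, negMulLog]
    field_simp
    ring

theorem relEntropy_nonneg (hw : ∀ i, 0 ≤ w i) (hb : ∀ i, 0 < b i) : 0 ≤ relEntropy w b :=
  sum_nonneg fun i _ => mul_nonneg (hb i).le (klFun_nonneg (div_nonneg (hw i) (hb i).le))

theorem relEntropy_eq_zero_iff (hw : ∀ i, 0 ≤ w i) (hb : ∀ i, 0 < b i) :
    relEntropy w b = 0 ↔ w = b := by
  have hterm : ∀ i, 0 ≤ b i * klFun (w i / b i) :=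
    fun i => mul_nonneg (hb i).le (klFun_nonneg (div_nonneg (hw i) (hb i).le))
  simp only [relEntropy, sum_eq_zero_iff_of_nonneg fun i _ => hterm i, mem_univ, true_implies,
    funext_iff]
  refine forall_congr' fun i => ?_
  rw [mul_eq_zero, or_iff_right (hb i).ne', klFun_eq_zero_iff (div_nonneg (hw i) (hb i).le),
    div_eq_one_iff_eq (hb i).ne']

theorem relEntropy_self (hb : ∀ i, 0 < b i) : relEntropy b b = 0 :=
  (relEntropy_eq_zero_iff (fun i => (hb i).le) hb).2 rfl

theorem sum_negMulLog_add_mul_log {a : ι → ℝ} (hw : ∑ i, w i = 1) (ha : ∀ i, 0 < a i) :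
    ∑ i, (negMulLog (w i) + w i * log (a i)) =
      log (∑ i, a i) - relEntropy w (fun i => a i / ∑ j, a j) := by
  have : Nonempty ι := by
    by_contra h
    simp [not_nonempty_iff.mp h] at hw
  set A := ∑ j, a j
  have hA : 0 < A := sum_pos (fun i _ => ha i) univ_nonempty
  have hterm : ∀ i, negMulLog (w i) + w i * log (a i) =
      (a i / A - w i - a i / A * klFun (w i / (a i / A))) + w i * log A := by
    intro i
    rw [← negMulLog_add_mul_log_add_mul_klFun (w i) (div_pos (ha i) hA).ne',
      log_div (ha i).ne' hA.ne']
    ring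
  rw [sum_congr rfl fun i _ => hterm i, sum_add_distrib, sum_sub_distrib, sum_sub_distrib,
    ← sum_div, div_self hA.ne', hw, ← sum_mul, hw, relEntropy]
  ring

end RelEntropy

section Marginals

variable {X₁ X₂ : Type*} [Fintype X₂] {p : X₂ × X₁ → ℝ}

theorem sum_marg1 [Fintype X₁] (p : X₂ × X₁ → ℝ) : ∑ x₁, marg1 p x₁ = ∑ z, p z := by
  rw [Fintype.sum_prod_type, sum_comm]
  rfl

theorem marg1_nonneg (hp : ∀ z, 0 ≤ p z) (x₁ : X₁) : 0 ≤ marg1 p x₁ :=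
  sum_nonneg fun x₂ _ => hp (x₂, x₁)

theorem cond2_nonneg (hp : ∀ z, 0 ≤ p z) (x₂ : X₂) (x₁ : X₁) : 0 ≤ cond2 p x₂ x₁ :=
  div_nonneg (hp _) (marg1_nonneg hp x₁)

theorem cond2_mul_marg1 {x₁ : X₁} (h : marg1 p x₁ ≠ 0) (x₂ : X₂) :
    cond2 p x₂ x₁ * marg1 p x₁ = p (x₂, x₁) :=
  div_mul_cancel₀ _ h

theorem sum_cond2 {x₁ : X₁} (h : marg1 p x₁ ≠ 0) : ∑ x₂, cond2 p x₂ x₁ = 1 := by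
  simp only [cond2, ← sum_div]
  exact div_self h

variable [Nonempty X₂]

theorem marg1_pos (hp : ∀ z, 0 < p z) (x₁ : X₁) : 0 < marg1 p x₁ :=
  sum_pos (fun x₂ _ => hp (x₂, x₁)) univ_nonempty

theorem cond2_pos (hp : ∀ z, 0 < p z) (x₂ : X₂) (x₁ : X₁) : 0 < cond2 p x₂ x₁ :=
  div_pos (hp _) (marg1_pos hp x₁)

end Marginals

section TwoScale

variable {X₁ X₂ : Type*} [Fintype X₁] [Fintype X₂]

noncomputable def twoScaleDivergence (c : ℝ) (p r : X₂ × X₁ → ℝ) : ℝ :=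
  relEntropy (marg1 p) (marg1 r) +
    c * ∑ x₁, marg1 p x₁ * relEntropy (fun x₂ => cond2 p x₂ x₁) (fun x₂ => cond2 r x₂ x₁)

variable [Nonempty X₂] {c : ℝ} {p r : X₂ × X₁ → ℝ}

theorem twoScaleDivergence_nonneg (hc : 0 ≤ c) (hp : ∀ z, 0 ≤ p z) (hr : ∀ z, 0 < r z) :
    0 ≤ twoScaleDivergence c p r :=
  add_nonneg (relEntropy_nonneg (marg1_nonneg hp) (marg1_pos hr)) <|
    mul_nonneg hc <| sum_nonneg fun x₁ _ => mul_nonneg (marg1_nonneg hp x₁) <|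
      relEntropy_nonneg (fun x₂ => cond2_nonneg hp x₂ x₁) (fun x₂ => cond2_pos hr x₂ x₁)

theorem twoScaleDivergence_eq_zero_iff (hc : 0 < c) (hp : ∀ z, 0 ≤ p z) (hr : ∀ z, 0 < r z) :
    twoScaleDivergence c p r = 0 ↔ p = r := by
  refine ⟨fun h => ?_, fun h => ?_⟩
  · have hfibre : ∀ x₁, 0 ≤ marg1 p x₁ *
        relEntropy (fun x₂ => cond2 p x₂ x₁) (fun x₂ => cond2 r x₂ x₁) :=
      fun x₁ => mul_nonneg (marg1_nonneg hp x₁) <|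
        relEntropy_nonneg (fun x₂ => cond2_nonneg hp x₂ x₁) (fun x₂ => cond2_pos hr x₂ x₁)
    have hmarg := relEntropy_nonneg (marg1_nonneg hp) (marg1_pos hr)
    have hsum := sum_nonneg fun x₁ (_ : x₁ ∈ univ) => hfibre x₁
    obtain ⟨hmarg0, hsum0⟩ := (add_eq_zero_iff_of_nonneg hmarg (mul_nonneg hc.le hsum)).1 h
    have hq : marg1 p = marg1 r :=
      (relEntropy_eq_zero_iff (marg1_nonneg hp) (marg1_pos hr)).1 hmarg0
    have hcond : ∀ x₁, (fun x₂ => cond2 p x₂ x₁) = fun x₂ => cond2 r x₂ x₁ := by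
      intro x₁
      refine (relEntropy_eq_zero_iff (fun x₂ => cond2_nonneg hp x₂ x₁)
        (fun x₂ => cond2_pos hr x₂ x₁)).1 ?_
      have hx₁ := (sum_eq_zero_iff_of_nonneg fun x₁ _ => hfibre x₁).1
        ((mul_eq_zero.1 hsum0).resolve_left hc.ne') x₁ (mem_univ x₁)
      exact (mul_eq_zero.1 hx₁).resolve_left (hq ▸ marg1_pos hr x₁).ne'
    funext ⟨x₂, x₁⟩
    calc p (x₂, x₁) = cond2 p x₂ x₁ * marg1 p x₁ :=
          (cond2_mul_marg1 (hq ▸ marg1_pos hr x₁).ne' x₂).symm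
      _ = cond2 r x₂ x₁ * marg1 r x₁ := by rw [congrFun (hcond x₁) x₂, hq]
      _ = r (x₂, x₁) := cond2_mul_marg1 (marg1_pos hr x₁).ne' x₂
  · subst h
    rw [twoScaleDivergence, relEntropy_self (marg1_pos hr),
      sum_eq_zero fun x₁ _ => by rw [relEntropy_self fun x₂ => cond2_pos hr x₂ x₁, mul_zero],
      mul_zero, add_zero]

end TwoScale

section TwoScaleMeasure

variable {X₁ X₂ : Type*} [Fintype X₂] (H : X₂ × X₁ → ℝ)

theorem Z1_pos [Nonempty X₂] (ζ : ℝ) (x₁ : X₁) : 0 < Z1 H ζ x₁ :=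
  sum_pos (fun _ _ => exp_pos _) univ_nonempty

variable [Fintype X₁] [Nonempty X₂] (μ γ : ℝ)

theorem marg1_twoScale (x₁ : X₁) :
    marg1 (twoScale H μ γ) x₁ =
      Z1 H (μ / (1 + γ)) x₁ ^ (1 + γ) / ∑ y₁, Z1 H (μ / (1 + γ)) y₁ ^ (1 + γ) := by
  rw [marg1]
  simp_rw [twoScale]
  rw [← mul_sum, ← sum_div]
  exact (congrArg _ (div_self (Z1_pos H _ x₁).ne')).trans (mul_one _)

variable [Nonempty X₁]

theorem sum_Z1_rpow_pos (ζ c : ℝ) : 0 < ∑ x₁, Z1 H ζ x₁ ^ c :=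
  sum_pos (fun x₁ _ => rpow_pos_of_pos (Z1_pos H ζ x₁) c) univ_nonempty

theorem twoScale_pos (z : X₂ × X₁) : 0 < twoScale H μ γ z :=
  mul_pos (div_pos (rpow_pos_of_pos (Z1_pos H _ _) _) (sum_Z1_rpow_pos H _ _))
    (div_pos (exp_pos _) (Z1_pos H _ _))

theorem sum_twoScale : ∑ z, twoScale H μ γ z = 1 := by
  rw [← sum_marg1]
  simp_rw [marg1_twoScale]
  rw [← sum_div, div_self (sum_Z1_rpow_pos H _ _).ne']

theorem cond2_twoScale (x₂ : X₂) (x₁ : X₁) :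
    cond2 (twoScale H μ γ) x₂ x₁ = exp (μ / (1 + γ) * H (x₂, x₁)) / Z1 H (μ / (1 + γ)) x₁ := by
  rw [cond2, marg1_twoScale]
  exact mul_div_cancel_left₀ _
    (div_pos (rpow_pos_of_pos (Z1_pos H _ x₁) _) (sum_Z1_rpow_pos H _ _)).ne'

theorem fibre_entropy_add_energy_eq (hγ : 1 + γ ≠ 0) {p : X₂ × X₁ → ℝ} (hp : ∀ z, 0 ≤ p z)
    (x₁ : X₁) :
    (1 + γ) * (marg1 p x₁ * ∑ x₂, negMulLog (cond2 p x₂ x₁)) +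
        μ * ∑ x₂, p (x₂, x₁) * H (x₂, x₁) =
      marg1 p x₁ * log (Z1 H (μ / (1 + γ)) x₁ ^ (1 + γ)) -
        (1 + γ) * (marg1 p x₁ * relEntropy (fun x₂ => cond2 p x₂ x₁)
          (fun x₂ => cond2 (twoScale H μ γ) x₂ x₁)) := by
  rcases (marg1_nonneg hp x₁).eq_or_lt with hq | hq
  · have hp0 : ∀ x₂, p (x₂, x₁) = 0 := fun x₂ =>
      (sum_eq_zero_iff_of_nonneg fun x₂ _ => hp (x₂, x₁)).1 hq.symm x₂ (mem_univ x₂)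
    simp [← hq, hp0]
  have hgibbs : ∑ x₂, negMulLog (cond2 p x₂ x₁) + ∑ x₂, cond2 p x₂ x₁ * (μ / (1 + γ) * H (x₂, x₁))
      = log (Z1 H (μ / (1 + γ)) x₁) - relEntropy (fun x₂ => cond2 p x₂ x₁)
        (fun x₂ => exp (μ / (1 + γ) * H (x₂, x₁)) / Z1 H (μ / (1 + γ)) x₁) := by
    have h := sum_negMulLog_add_mul_log (sum_cond2 hq.ne')
      fun x₂ => exp_pos (μ / (1 + γ) * H (x₂, x₁))
    simp only [log_exp, sum_add_distrib] at h
    exact h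
  have henergy : μ * ∑ x₂, p (x₂, x₁) * H (x₂, x₁) =
      (1 + γ) * marg1 p x₁ * ∑ x₂, cond2 p x₂ x₁ * (μ / (1 + γ) * H (x₂, x₁)) := by
    rw [mul_sum, mul_sum]
    refine sum_congr rfl fun x₂ _ => ?_
    rw [← cond2_mul_marg1 hq.ne' x₂]
    field_simp
  simp_rw [cond2_twoScale]
  rw [log_rpow (Z1_pos H _ x₁), henergy]
  linear_combination (1 + γ) * marg1 p x₁ * hgibbs

theorem phi_eq_log_sub_twoScaleDivergence (hγ : 1 + γ ≠ 0) {p : X₂ × X₁ → ℝ}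
    (hp : ∀ z, 0 ≤ p z) (hp1 : ∑ z, p z = 1) :
    phi H μ γ p = log (∑ x₁, Z1 H (μ / (1 + γ)) x₁ ^ (1 + γ)) -
      twoScaleDivergence (1 + γ) p (twoScale H μ γ) := by
  have hgibbs := sum_negMulLog_add_mul_log ((sum_marg1 p).trans hp1)
    fun x₁ => rpow_pos_of_pos (Z1_pos H (μ / (1 + γ)) x₁) (1 + γ)
  rw [← funext (marg1_twoScale H μ γ)] at hgibbs
  calc phi H μ γ p
      = ∑ x₁, (negMulLog (marg1 p x₁) + (1 + γ) * (marg1 p x₁ * ∑ x₂, negMulLog (cond2 p x₂ x₁))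
          + μ * ∑ x₂, p (x₂, x₁) * H (x₂, x₁)) := by
        rw [phi, ← sum_marg1 fun z => p z * H z, mul_sum, mul_sum, ← sum_add_distrib,
          ← sum_add_distrib]
        rfl
    _ = ∑ x₁, (negMulLog (marg1 p x₁) + marg1 p x₁ * log (Z1 H (μ / (1 + γ)) x₁ ^ (1 + γ)))
          - (1 + γ) * ∑ x₁, marg1 p x₁ * relEntropy (fun x₂ => cond2 p x₂ x₁)
            (fun x₂ => cond2 (twoScale H μ γ) x₂ x₁) := by
        rw [mul_sum, ← sum_sub_distrib]
        refine sum_congr rfl fun x₁ _ => ?_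
        rw [add_assoc, fibre_entropy_add_energy_eq H μ γ hγ hp x₁]
        ring
    _ = _ := by
        rw [hgibbs, twoScaleDivergence]
        ring

end TwoScaleMeasure

/-- Solution of the two-scale variational principle: `φ` is uniquely maximized by the
two-scale measure and the maximal value is `log Σ_{x₁} Z₁(x₁)^{1+γ}`. -/
theorem two_scale_variational_principle {X₁ X₂ : Type*} [Fintype X₁] [Fintype X₂]
    [Nonempty X₁] [Nonempty X₂]
    (H : X₂ × X₁ → ℝ) (μ γ : ℝ) (hγ : -1 < γ) :
    (∀ p : X₂ × X₁ → ℝ, (∀ z, 0 ≤ p z) → ∑ z, p z = 1 →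
        phi H μ γ p ≤ phi H μ γ (twoScale H μ γ)) ∧
    (∀ p : X₂ × X₁ → ℝ, (∀ z, 0 ≤ p z) → ∑ z, p z = 1 →
        phi H μ γ p = phi H μ γ (twoScale H μ γ) → p = twoScale H μ γ) ∧
    phi H μ γ (twoScale H μ γ) =
      Real.log (∑ x₁, Z1 H (μ / (1 + γ)) x₁ ^ (1 + γ)) := by
  have hc : 0 < 1 + γ := by linarith
  have hts := twoScale_pos H μ γ
  have hval : phi H μ γ (twoScale H μ γ) = log (∑ x₁, Z1 H (μ / (1 + γ)) x₁ ^ (1 + γ)) := by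
    rw [phi_eq_log_sub_twoScaleDivergence H μ γ hc.ne' (fun z => (hts z).le) (sum_twoScale H μ γ),
      (twoScaleDivergence_eq_zero_iff hc (fun z => (hts z).le) hts).2 rfl, sub_zero]
  refine ⟨fun p hp hp1 => ?_, fun p hp hp1 heq => ?_, hval⟩
  · rw [hval, phi_eq_log_sub_twoScaleDivergence H μ γ hc.ne' hp hp1]
    linarith [twoScaleDivergence_nonneg hc.le hp hts]
  · rw [hval, phi_eq_log_sub_twoScaleDivergence H μ γ hc.ne' hp hp1] at heq
    exact (twoScaleDivergence_eq_zero_iff hc hp hts).1 (by linarith)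
end

section
/- Sanov's theorem for finite alphabets (Boltzmann's argument): let q be a probability distribution on a finite set X with q_i > 0 for all i, and let Y = (Y_i) be multinomially distributed with parameters n and q. Then for any probability vector p on X with np integer-valued, (1/n) log P(Y = np) = −D_KL(p‖q) + O(log n / n), where D_KL(p‖q) = Σ_i p_i log(p_i/q_i). In particular (1/n) log P(Y = np_n) → −D_KL(p‖q) whenever p_n are probability vectors with n p_n integer-valued and p_n → p. -/
/-!
Write `log k! = k log k - k + r k`. In `log P(Y = y) + n D(y/n ‖ q)` the terms in `log q i`
cancel, and since `∑ i, y i = n` so do the terms `y i log n`, leaving exactly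
`r n - ∑ i, r (y i)`.
Stirling's bounds `0 ≤ r k ≤ 1 + (log k) / 2` make this `O(log n)`, with constant `3 |X|`.
The limit statement follows because `D(· ‖ q)` is continuous when every `q i` is positive.
-/

open Finset Real Filter

/-- Probability that a multinomial `(n, q)` vector equals `y`:
`n!/∏ y_i! · ∏ q_i^{y_i}`. -/
noncomputable def multinomialProb {X : Type*} [Fintype X] (q : X → ℝ) (n : ℕ)
    (y : X → ℕ) : ℝ :=
  ((n.factorial : ℝ) / ∏ i, ((y i).factorial : ℝ)) * ∏ i, q i ^ y i

/-- Kullback–Leibler divergence on a finite set (natural log, `0 log 0 = 0`). -/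
noncomputable def klDiv {X : Type*} [Fintype X] (p q : X → ℝ) : ℝ :=
  ∑ i, p i * Real.log (p i / q i)

noncomputable def stirlingRemainder (k : ℕ) : ℝ :=
  log k.factorial - k * log k + k

@[simp]
lemma stirlingRemainder_zero : stirlingRemainder 0 = 0 := by
  simp [stirlingRemainder]

@[simp]
lemma stirlingRemainder_one : stirlingRemainder 1 = 1 := by
  simp [stirlingRemainder]

lemma stirlingRemainder_nonneg (k : ℕ) : 0 ≤ stirlingRemainder k := by
  rcases Nat.eq_zero_or_pos k with rfl | hk
  · simp
  have h := Real.pow_div_factorial_le_exp (k : ℝ) (Nat.cast_nonneg k) k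
  rw [div_le_iff₀ (by positivity), ← Real.log_le_log_iff (by positivity) (by positivity),
    Real.log_mul (by positivity) (by positivity), Real.log_exp, Real.log_pow] at h
  rw [stirlingRemainder]
  linarith

lemma stirlingRemainder_le {k : ℕ} (hk : k ≠ 0) : stirlingRemainder k ≤ 1 + log k / 2 := by
  obtain ⟨m, rfl⟩ := Nat.exists_eq_add_one_of_ne_zero hk
  -- `log (stirlingSeq k) = stirlingRemainder k - log (2 * k) / 2` is antitone:
  -- compare with `k = 1`.
  have h := Stirling.log_stirlingSeq'_antitone (Nat.zero_le m)
  have hk0 : (0 : ℝ) < (m + 1 : ℕ) := by positivity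
  simp only [Function.comp_apply, Nat.succ_eq_add_one, zero_add, Stirling.log_stirlingSeq_formula,
    Nat.factorial_one, Nat.cast_one, Real.log_one, mul_one, one_mul, one_div, Real.log_inv,
    Real.log_exp] at h
  rw [Real.log_mul two_ne_zero hk0.ne', Real.log_div hk0.ne' (Real.exp_pos 1).ne',
    Real.log_exp] at h
  rw [stirlingRemainder]
  linarith

lemma stirlingRemainder_of_le_one {k : ℕ} (hk : k ≤ 1) : stirlingRemainder k = k := by
  interval_cases k <;> simp

lemma stirlingRemainder_le_three_mul_log {k n : ℕ} (hkn : k ≤ n) (hn : 2 ≤ n) :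
    stirlingRemainder k ≤ 3 * log n := by
  have hlog_n : log 2 ≤ log n := Real.log_le_log two_pos (by exact_mod_cast hn)
  have hlog_two := Real.log_two_gt_d9
  rcases eq_or_ne k 0 with rfl | hk
  · rw [stirlingRemainder_zero]; linarith
  have hlog_k : log k ≤ log n :=
    Real.log_le_log (by positivity) (by exact_mod_cast hkn)
  linarith [stirlingRemainder_le hk]

lemma abs_stirlingRemainder_sub_sum_le {ι : Type*} [Fintype ι] {n : ℕ} (hn : 1 ≤ n)
    {y : ι → ℕ} (hy : ∑ i, y i = n) :
    |stirlingRemainder n - ∑ i, stirlingRemainder (y i)| ≤ 3 * Fintype.card ι * log n := by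
  have hy_le : ∀ i, y i ≤ n :=
    fun i => hy ▸ single_le_sum (fun j _ => (y j).zero_le) (mem_univ i)
  -- For `n = 1` the right-hand side vanishes, so the bound has to be an equality there.
  rcases hn.eq_or_lt with rfl | hn
  · have hsum : ∑ i, stirlingRemainder (y i) = 1 := by
      simp_rw [stirlingRemainder_of_le_one (hy_le _)]
      exact_mod_cast hy
    simp [hsum]
  obtain ⟨i, -, -⟩ := exists_ne_zero_of_sum_ne_zero (hy.trans_ne (by omega))
  have hcard : (1 : ℝ) ≤ Fintype.card ι := by exact_mod_cast Fintype.card_pos_iff.mpr ⟨i⟩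
  have hlog : 0 ≤ log n := Real.log_nonneg (by exact_mod_cast hn.le)
  have hsum_le : ∑ i, stirlingRemainder (y i) ≤ Fintype.card ι * (3 * log n) := by
    simpa using
      sum_le_sum fun i (_ : i ∈ univ) => stirlingRemainder_le_three_mul_log (hy_le i) hn
  have hsum_nonneg : 0 ≤ ∑ i, stirlingRemainder (y i) :=
    sum_nonneg fun i _ => stirlingRemainder_nonneg (y i)
  have hrn := stirlingRemainder_le_three_mul_log le_rfl hn
  rw [abs_sub_le_iff]
  constructor <;> nlinarith [stirlingRemainder_nonneg n]

lemma mul_mul_log_div_div {k n : ℕ} (hkn : k ≤ n) {q : ℝ} (hq : q ≠ 0) :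
    n * ((k / n : ℝ) * log (k / n / q)) = k * log k - k * log n - k * log q := by
  rcases eq_or_ne k 0 with rfl | hk
  · simp
  have hn : (n : ℝ) ≠ 0 := by exact_mod_cast (Nat.pos_of_ne_zero hk).trans_le hkn |>.ne'
  rw [Real.log_div (by positivity) hq, Real.log_div (by exact_mod_cast hk) hn]
  field_simp

lemma tendsto_log_natCast_div_atTop : Tendsto (fun n : ℕ => log n / n) atTop (nhds 0) :=
  (Real.tendsto_pow_log_div_mul_add_atTop 1 0 1 one_ne_zero).comp tendsto_natCast_atTop_atTop
    |>.congr fun n => by simp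

section Multinomial

variable {X : Type*} [Fintype X] {q : X → ℝ}

lemma log_multinomialProb (hq : ∀ i, q i ≠ 0) (n : ℕ) (y : X → ℕ) :
    log (multinomialProb q n y) =
      log n.factorial - ∑ i, log (y i).factorial + ∑ i, y i * log (q i) := by
  have hfact : ∀ k : ℕ, (k.factorial : ℝ) ≠ 0 := fun k => by positivity
  have hfacts : ∏ i, ((y i).factorial : ℝ) ≠ 0 := prod_ne_zero_iff.mpr fun i _ => hfact _
  have hpows : ∏ i, q i ^ y i ≠ 0 := prod_ne_zero_iff.mpr fun i _ => pow_ne_zero _ (hq i)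
  rw [multinomialProb, Real.log_mul (div_ne_zero (hfact n) hfacts) hpows,
    Real.log_div (hfact n) hfacts, Real.log_prod fun i _ => hfact _,
    Real.log_prod fun i _ => pow_ne_zero _ (hq i)]
  simp only [Real.log_pow]

lemma mul_klDiv_div (hq : ∀ i, q i ≠ 0) {n : ℕ} {y : X → ℕ} (hy : ∑ i, y i = n) :
    n * klDiv (fun i => (y i : ℝ) / n) q =
      ∑ i, y i * log (y i) - n * log n - ∑ i, y i * log (q i) := by
  have hy_le : ∀ i, y i ≤ n :=
    fun i => hy ▸ single_le_sum (fun j _ => (y j).zero_le) (mem_univ i)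
  have hy_real : ∑ i, (y i : ℝ) = n := by exact_mod_cast hy
  rw [klDiv, mul_sum, sum_congr rfl fun i _ => mul_mul_log_div_div (hy_le i) (hq i),
    sum_sub_distrib, sum_sub_distrib, ← sum_mul, hy_real]

lemma log_multinomialProb_add_mul_klDiv (hq : ∀ i, q i ≠ 0) {n : ℕ} {y : X → ℕ}
    (hy : ∑ i, y i = n) :
    log (multinomialProb q n y) + n * klDiv (fun i => (y i : ℝ) / n) q =
      stirlingRemainder n - ∑ i, stirlingRemainder (y i) := by
  have hy_real : ∑ i, (y i : ℝ) = n := by exact_mod_cast hy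
  rw [log_multinomialProb hq, mul_klDiv_div hq hy]
  simp only [stirlingRemainder, sum_add_distrib, sum_sub_distrib, hy_real]
  ring

lemma continuous_klDiv_left (hq : ∀ i, q i ≠ 0) : Continuous fun p => klDiv p q := by
  have h : ∀ p : X → ℝ, klDiv p q = ∑ i, (p i * log (p i) - p i * log (q i)) := by
    intro p
    refine sum_congr rfl fun i _ => ?_
    rcases eq_or_ne (p i) 0 with hp | hp
    · simp [hp]
    · rw [Real.log_div hp (hq i), mul_sub]
  simp_rw [h]
  fun_prop

lemma abs_inv_mul_log_multinomialProb_add_klDiv_le (hq : ∀ i, q i ≠ 0) {n : ℕ} (hn : 1 ≤ n)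
    {y : X → ℕ} (hy : ∑ i, y i = n) :
    |(1 / (n : ℝ)) * log (multinomialProb q n y) + klDiv (fun i => (y i : ℝ) / n) q| ≤
      3 * Fintype.card X * log n / n := by
  have hn0 : (0 : ℝ) < n := by exact_mod_cast hn
  have h : (1 / (n : ℝ)) * log (multinomialProb q n y) + klDiv (fun i => (y i : ℝ) / n) q =
      (stirlingRemainder n - ∑ i, stirlingRemainder (y i)) / n := by
    rw [← log_multinomialProb_add_mul_klDiv hq hy]
    field_simp
  rw [h, abs_div, abs_of_pos hn0]
  exact div_le_div_of_nonneg_right (abs_stirlingRemainder_sub_sum_le hn hy) hn0.le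

end Multinomial

theorem sanov_finite_general {X : Type*} [Fintype X] [Nonempty X]
    (q : X → ℝ) (hq : ∀ i, 0 < q i) :
    (∃ C : ℝ, 0 < C ∧ ∀ n : ℕ, 1 ≤ n → ∀ y : X → ℕ, ∑ i, y i = n →
      |(1 / (n : ℝ)) * Real.log (multinomialProb q n y) +
          klDiv (fun i => (y i : ℝ) / n) q| ≤ C * Real.log n / n) ∧
    (∀ (p : X → ℝ), (∀ i, 0 ≤ p i) → ∑ i, p i = 1 →
      ∀ y : ℕ → X → ℕ, (∀ n, 1 ≤ n → ∑ i, y n i = n) →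
      (∀ i, Tendsto (fun n : ℕ => (y n i : ℝ) / n) atTop (nhds (p i))) →
      Tendsto (fun n : ℕ => (1 / (n : ℝ)) * Real.log (multinomialProb q n (y n)))
        atTop (nhds (- klDiv p q))) := by
  have hq0 : ∀ i, q i ≠ 0 := fun i => (hq i).ne'
  refine ⟨⟨3 * Fintype.card X, by positivity,
    fun n hn y hy => abs_inv_mul_log_multinomialProb_add_klDiv_le hq0 hn hy⟩, ?_⟩
  intro p _ _ y hy hy_lim
  have hkl : Tendsto (fun n : ℕ => klDiv (fun i => (y n i : ℝ) / n) q) atTop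
      (nhds (klDiv p q)) :=
    ((continuous_klDiv_left hq0).tendsto p).comp (tendsto_pi_nhds.mpr hy_lim)
  have herr : Tendsto (fun n : ℕ => (1 / (n : ℝ)) * Real.log (multinomialProb q n (y n)) +
      klDiv (fun i => (y n i : ℝ) / n) q) atTop (nhds 0) := by
    refine squeeze_zero_norm' ?_ (by simpa using
      tendsto_log_natCast_div_atTop.const_mul (3 * Fintype.card X : ℝ))
    filter_upwards [eventually_ge_atTop 1] with n hn
    rw [Real.norm_eq_abs, ← mul_div_assoc]
    exact abs_inv_mul_log_multinomialProb_add_klDiv_le hq0 hn (hy n hn)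
  simpa using herr.sub hkl

/-- Sanov's theorem for finite alphabets (Boltzmann's argument):
`(1/n) log P(Y = np) = −D_KL(p‖q) + O(log n / n)` uniformly over empirical
distributions `p` with `np` integer-valued, and consequently
`(1/n) log P(Y = n pₙ) → −D_KL(p‖q)` whenever `pₙ → p` pointwise. -/
theorem sanov_finite {X : Type*} [Fintype X] [Nonempty X]
    (q : X → ℝ) (hq : ∀ i, 0 < q i) (hq1 : ∑ i, q i = 1) :
    (∃ C : ℝ, 0 < C ∧ ∀ n : ℕ, 1 ≤ n → ∀ y : X → ℕ, ∑ i, y i = n →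
      |(1 / (n : ℝ)) * Real.log (multinomialProb q n y) +
          klDiv (fun i => (y i : ℝ) / n) q| ≤ C * Real.log n / n) ∧
    (∀ (p : X → ℝ), (∀ i, 0 ≤ p i) → ∑ i, p i = 1 →
      ∀ y : ℕ → X → ℕ, (∀ n, 1 ≤ n → ∑ i, y n i = n) →
      (∀ i, Tendsto (fun n : ℕ => (y n i : ℝ) / n) atTop (nhds (p i))) →
      Tendsto (fun n : ℕ => (1 / (n : ℝ)) * Real.log (multinomialProb q n (y n)))
        atTop (nhds (- klDiv p q))) :=
  sanov_finite_general q hq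
end

section
/- Linear response / fluctuation identity for the two-scale measure: let p_λ be the two-scale measure on X_2 × X_1 built from the perturbed Hamiltonian H + λA with parameters ζ₂ = β₂, outer exponent ζ = β₁/β₂, where A depends only on x_1, so that p_λ^{<1}(x_1) ∝ (Σ_{x_2} e^{β₂ H})^{β₁/β₂} e^{β₁ λ A(x_1)} and the conditionals are unchanged. Then for any observable O : X_2 × X_1 → ℝ, d/dλ ⟨O⟩_λ |_{λ=0} = β₁(⟨O A⟩ − ⟨O⟩⟨A⟩). -/
open Finset Real

/-- Inner partition function `Z(x₁) = Σ_{x₂} e^{β₂ H(x₂,x₁)}`. -/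
noncomputable def Zfn {X₁ X₂ : Type*} [Fintype X₂] (H : X₂ × X₁ → ℝ) (β₂ : ℝ)
    (x₁ : X₁) : ℝ :=
  ∑ x₂, Real.exp (β₂ * H (x₂, x₁))

/-- The two-scale measure for the Hamiltonian `H + λA` with `A` depending only on
`x₁`: only the outer marginal is perturbed,
`p_λ^{<1}(x₁) ∝ Z(x₁)^{β₁/β₂} e^{β₁ λ A(x₁)}`, the conditionals are unchanged. -/
noncomputable def perturbedTwoScale {X₁ X₂ : Type*} [Fintype X₁] [Fintype X₂]
    (H : X₂ × X₁ → ℝ) (A : X₁ → ℝ) (β₁ β₂ l : ℝ) (z : X₂ × X₁) : ℝ :=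
  (Zfn H β₂ z.2 ^ (β₁ / β₂) * Real.exp (β₁ * l * A z.2) /
      ∑ y₁, Zfn H β₂ y₁ ^ (β₁ / β₂) * Real.exp (β₁ * l * A y₁)) *
    (Real.exp (β₂ * H z) / Zfn H β₂ z.2)

/-- Expectation of an observable under the perturbed two-scale measure. -/
noncomputable def pAvg {X₁ X₂ : Type*} [Fintype X₁] [Fintype X₂]
    (H : X₂ × X₁ → ℝ) (A : X₁ → ℝ) (β₁ β₂ l : ℝ) (O : X₂ × X₁ → ℝ) : ℝ :=
  ∑ z, perturbedTwoScale H A β₁ β₂ l z * O z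

/-- Linear response / fluctuation identity for the two-scale measure, in the case of
a perturbation `A` depending only on `x₁`:
`d/dλ ⟨O⟩_λ |_{λ=0} = β₁ (⟨OA⟩ − ⟨O⟩⟨A⟩)`. -/
theorem two_scale_linear_response {X₁ X₂ : Type*} [Fintype X₁] [Fintype X₂]
    [Nonempty X₁] [Nonempty X₂]
    (H : X₂ × X₁ → ℝ) (A : X₁ → ℝ) (β₁ β₂ : ℝ) (hβ₁ : 0 < β₁) (hβ₂ : 0 < β₂)
    (O : X₂ × X₁ → ℝ) :
    HasDerivAt (fun l => pAvg H A β₁ β₂ l O)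
      (β₁ * (pAvg H A β₁ β₂ 0 (fun z => O z * A z.2) -
        pAvg H A β₁ β₂ 0 O * pAvg H A β₁ β₂ 0 (fun z => A z.2))) 0 := by
  classical
  have hZ : ∀ x₁ : X₁, 0 < Zfn H β₂ x₁ := fun x₁ =>
    Finset.sum_pos (fun _ _ => Real.exp_pos _) Finset.univ_nonempty
  set W : X₁ → ℝ := fun x₁ => Zfn H β₂ x₁ ^ (β₁ / β₂) with hW
  have hWpos : ∀ x₁, 0 < W x₁ := fun x₁ => Real.rpow_pos_of_pos (hZ x₁) _
  set c : X₂ × X₁ → ℝ := fun z => Real.exp (β₂ * H z) / Zfn H β₂ z.2 with hc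
  set D : ℝ → ℝ := fun l => ∑ y₁, W y₁ * Real.exp (β₁ * l * A y₁) with hD
  set N : ℝ → ℝ := fun l => ∑ z, W z.2 * Real.exp (β₁ * l * A z.2) * c z * O z
    with hN
  have hDpos : ∀ l, 0 < D l := fun l =>
    Finset.sum_pos (fun y₁ _ => mul_pos (hWpos y₁) (Real.exp_pos _))
      Finset.univ_nonempty
  -- pAvg equals N l / D l for any observable
  have hpAvg : ∀ (l : ℝ) (g : X₂ × X₁ → ℝ),
      pAvg H A β₁ β₂ l g =
        (∑ z, W z.2 * Real.exp (β₁ * l * A z.2) * c z * g z) / D l := by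
    intro l g
    rw [pAvg, Finset.sum_div]
    refine Finset.sum_congr rfl fun z _ => ?_
    rw [perturbedTwoScale]
    simp only [hW, hc, hD]
    ring
  -- derivative of D
  have hDd : HasDerivAt D (∑ y₁, W y₁ * (β₁ * A y₁)) 0 := by
    rw [hD]
    refine HasDerivAt.fun_sum fun y₁ _ => ?_
    have h1 : HasDerivAt (fun l : ℝ => β₁ * l * A y₁) (β₁ * A y₁) 0 := by
      have := ((hasDerivAt_id (0 : ℝ)).const_mul β₁).mul_const (A y₁)
      exact this.congr_deriv (by ring)
    have := (h1.exp).const_mul (W y₁)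
    exact this.congr_deriv (by simp)
  -- derivative of N
  have hNd : HasDerivAt N (∑ z, W z.2 * (β₁ * A z.2) * c z * O z) 0 := by
    rw [hN]
    refine HasDerivAt.fun_sum fun z _ => ?_
    have h1 : HasDerivAt (fun l : ℝ => β₁ * l * A z.2) (β₁ * A z.2) 0 := by
      have := ((hasDerivAt_id (0 : ℝ)).const_mul β₁).mul_const (A z.2)
      exact this.congr_deriv (by ring)
    have := (((h1.exp).const_mul (W z.2)).mul_const (c z)).mul_const (O z)
    exact this.congr_deriv (by simp)
  -- quotient rule
  have hq := hNd.div hDd (ne_of_gt (hDpos 0))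
  have hfun : (fun l => pAvg H A β₁ β₂ l O) = fun l => N l / D l := by
    funext l
    rw [hpAvg l O, hN]
  rw [hfun]
  -- values at 0
  set NOA : ℝ := ∑ z, W z.2 * Real.exp (β₁ * 0 * A z.2) * c z * (O z * A z.2)
    with hNOA
  set M : ℝ := ∑ y₁, W y₁ * A y₁ with hM
  -- marginalization: ∑ z, W z.2 * c z * A z.2 = M
  have hmarg : (∑ z, W z.2 * Real.exp (β₁ * 0 * A z.2) * c z * A z.2) = M := by
    rw [hM, Fintype.sum_prod_type, Finset.sum_comm]
    refine Finset.sum_congr rfl fun x₁ _ => ?_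
    simp only [hc]
    rw [show (∑ x₂ : X₂, W x₁ * Real.exp (β₁ * 0 * A x₁) *
        (Real.exp (β₂ * H (x₂, x₁)) / Zfn H β₂ x₁) * A x₁) =
        (W x₁ * A x₁ / Zfn H β₂ x₁) * ∑ x₂ : X₂, Real.exp (β₂ * H (x₂, x₁)) by
      rw [Finset.mul_sum]; refine Finset.sum_congr rfl fun x₂ _ => ?_
      simp [mul_comm]; ring]
    rw [show (∑ x₂ : X₂, Real.exp (β₂ * H (x₂, x₁))) = Zfn H β₂ x₁ from rfl,
      div_mul_cancel₀ _ (ne_of_gt (hZ x₁))]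
  have hN' : (∑ z, W z.2 * (β₁ * A z.2) * c z * O z) = β₁ * NOA := by
    rw [hNOA, Finset.mul_sum]
    refine Finset.sum_congr rfl fun z _ => ?_
    simp; ring
  have hD' : (∑ y₁, W y₁ * (β₁ * A y₁)) = β₁ * M := by
    rw [hM, Finset.mul_sum]; refine Finset.sum_congr rfl fun y₁ _ => ?_; ring
  rw [hN', hD'] at hq
  rw [Pi.div_def] at hq
  refine hq.congr_deriv ?_
  rw [hpAvg 0 (fun z => O z * A z.2), hpAvg 0 O, hpAvg 0 (fun z => A z.2),
    hmarg, ← hNOA,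
    show (∑ z, W z.2 * Real.exp (β₁ * 0 * A z.2) * c z * O z) = N 0 from rfl]
  have hD0 : D 0 ≠ 0 := ne_of_gt (hDpos 0)
  field_simp
end
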